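/- Let 𝒢 be an ultragraph with exactly one edge e, with s(e) ∉ r(e) and G⁰ = {s(e)} ∪ r(e), and let R be a unital commutative ring. Then L_R(𝒢) is epsilon-strongly ℤ-graded with respect to the canonical grading {L_R(𝒢)_m}_{m∈ℤ}; in particular, the condition that the source of every edge belongs to the range of some edge is not necessary for the canonical ℤ-grading of an ultragraph Leavitt path algebra to be epsilon-strong. -/

import Mathlib

/-- An ultragraph: a source map `src : E → V` and a range map assigning to each
edge a nonempty set of vertices. -/
structure Ultragraph (V : Type) (E : Type) : Type where
  src : E → V
  rng : E → Set V
  rng_nonempty : ∀ e, (rng e).Nonempty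

namespace Ultragraph

variable {V E : Type}

/-- A finite path: a (possibly empty) list of edges with compatible transitions. -/
def IsPath (G : Ultragraph V E) (es : List E) : Prop :=
  es.Chain' fun e f => G.src f ∈ G.rng e

/-- An infinite path. -/
def IsInfinitePath (G : Ultragraph V E) (p : ℕ → E) : Prop :=
  ∀ i : ℕ, G.src (p (i + 1)) ∈ G.rng (p i)

/-- Condition (Y). -/
def ConditionY (G : Ultragraph V E) : Prop :=
  ∀ p : ℕ → E, G.IsInfinitePath p →
    ∃ (k : ℕ) (α : List E) (hα : α ≠ []),
      α.length = k + 1 ∧ G.IsPath α ∧ G.src (p k) ∈ G.rng (α.getLast hα)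

/-- The collection 𝒢⁰ of generalized vertices: the smallest collection of subsets of `V`
containing the singletons and the ranges of edges, closed under finite unions and finite
intersections (the empty set is included for convenience; `p_∅ = 0`). -/
inductive InG0 (G : Ultragraph V E) : Set V → Prop
  | vertex (v : V) : InG0 G {v}
  | range (e : E) : InG0 G (G.rng e)
  | union {A B : Set V} : InG0 G A → InG0 G B → InG0 G (A ∪ B)
  | inter {A B : Set V} : InG0 G A → InG0 G B → InG0 G (A ∩ B)

/-- Generators of the Leavitt path algebra. -/
inductive LPAGen (G : Ultragraph V E) : Type
  | edge : E → LPAGen G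
  | star : E → LPAGen G
  | proj : (A : Set V) → G.InG0 A → LPAGen G

/-- The directed graph `E_𝒢` associated to an ultragraph, viewed again as an ultragraph
whose edge ranges are singletons. -/
def toGraph (G : Ultragraph V E) : Ultragraph V {q : E × V // q.2 ∈ G.rng q.1} where
  src q := G.src q.1.1
  rng q := {q.1.2}
  rng_nonempty q := ⟨q.1.2, rfl⟩

variable (R : Type) [CommRing R] (G : Ultragraph V E)

/-- The free `R`-algebra on the generators. -/
abbrev FA := FreeAlgebra R (LPAGen G)

/-- The generator `g` inside the free algebra. -/
def X (g : LPAGen G) : FA R G := FreeAlgebra.ι R g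

/-- The defining relations of the Leavitt path algebra of an ultragraph. -/
inductive LeavittRel : FA R G → FA R G → Prop
  | proj_empty (h : G.InG0 ∅) : LeavittRel (X R G (.proj ∅ h)) 0
  | proj_mul (A B : Set V) (hA : G.InG0 A) (hB : G.InG0 B) :
      LeavittRel (X R G (.proj A hA) * X R G (.proj B hB))
        (X R G (.proj (A ∩ B) (hA.inter hB)))
  | proj_union (A B : Set V) (hA : G.InG0 A) (hB : G.InG0 B) :
      LeavittRel (X R G (.proj (A ∪ B) (hA.union hB)))
        (X R G (.proj A hA) + X R G (.proj B hB) - X R G (.proj (A ∩ B) (hA.inter hB)))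
  | src_mul (e : E) :
      LeavittRel (X R G (.proj {G.src e} (InG0.vertex (G.src e))) * X R G (.edge e))
        (X R G (.edge e))
  | mul_rng (e : E) :
      LeavittRel (X R G (.edge e) * X R G (.proj (G.rng e) (InG0.range e)))
        (X R G (.edge e))
  | rng_mul_star (e : E) :
      LeavittRel (X R G (.proj (G.rng e) (InG0.range e)) * X R G (.star e))
        (X R G (.star e))
  | star_mul_src (e : E) :
      LeavittRel (X R G (.star e) * X R G (.proj {G.src e} (InG0.vertex (G.src e))))
        (X R G (.star e))
  | star_mul_same (e : E) :
      LeavittRel (X R G (.star e) * X R G (.edge e))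
        (X R G (.proj (G.rng e) (InG0.range e)))
  | star_mul_ne (e f : E) (h : e ≠ f) :
      LeavittRel (X R G (.star e) * X R G (.edge f)) 0
  | ck (v : V) (hfin : {e : E | G.src e = v}.Finite) (hne : {e : E | G.src e = v}.Nonempty) :
      LeavittRel (X R G (.proj {v} (InG0.vertex v)))
        (∑ e ∈ hfin.toFinset, X R G (.edge e) * X R G (.star e))

/-- The (unital) quotient of the free algebra by the Leavitt relations; the Leavitt
path algebra `L_R(𝒢)` sits inside it as the non-unital subalgebra generated by the
generators. -/
abbrev LPABig := RingQuot (LeavittRel R G)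

/-- The image of a generator in the quotient. -/
def gen (g : LPAGen G) : LPABig R G := RingQuot.mkAlgHom R (LeavittRel R G) (X R G g)

/-- `s_e`. -/
def sgen (e : E) : LPABig R G := gen R G (.edge e)

/-- `s_e^*`. -/
def tgen (e : E) : LPABig R G := gen R G (.star e)

/-- `p_A`. -/
def pgen (A : Set V) (hA : G.InG0 A) : LPABig R G := gen R G (.proj A hA)

/-- `s_α` for a finite path `α` (the empty product is `1` in the ambient algebra). -/
def sPath (es : List E) : LPABig R G := (es.map (sgen R G)).prod

/-- `s_β^*` for a finite path `β`. -/
def tPath (es : List E) : LPABig R G := (es.reverse.map (tgen R G)).prod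

/-- The monomial `s_α p_A s_β^*`. -/
def mono (α : List E) (A : Set V) (hA : G.InG0 A) (β : List E) : LPABig R G :=
  sPath R G α * pgen R G A hA * tPath R G β

/-- The `m`-th component of the canonical `ℤ`-grading: all finite `R`-linear combinations
of monomials `s_α p_A s_β^*` with `|α| - |β| = m`. -/
def zComp (m : ℤ) : AddSubgroup (LPABig R G) :=
  AddSubgroup.closure {x | ∃ (l : R) (α β : List E) (A : Set V) (hA : G.InG0 A),
    G.IsPath α ∧ G.IsPath β ∧ (α.length : ℤ) - (β.length : ℤ) = m ∧
    x = l • mono R G α A hA β}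

/-- The element of the free group on the edges determined by a finite path. -/
def pathWord (es : List E) : FreeGroup E := (es.map FreeGroup.of).prod

/-- The `g`-th component of the free-group grading: all finite `R`-linear combinations
of monomials `s_α p_A s_β^*` with `α β⁻¹ = g` in the free group on the edges. -/
def fComp (g : FreeGroup E) : AddSubgroup (LPABig R G) :=
  AddSubgroup.closure {x | ∃ (l : R) (α β : List E) (A : Set V) (hA : G.InG0 A),
    G.IsPath α ∧ G.IsPath β ∧ pathWord α * (pathWord β)⁻¹ = g ∧
    x = l • mono R G α A hA β}

/-- The set of generators inside the quotient. -/
def genSet : Set (LPABig R G) := Set.range (gen R G)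

/-- The Leavitt path algebra `L_R(𝒢)`: the non-unital subalgebra of the quotient
generated by the images of the generators. -/
def LPA : NonUnitalSubalgebra R (LPABig R G) := NonUnitalAlgebra.adjoin R (genSet R G)

/-- `s_e` as an element of `L_R(𝒢)`. -/
def sEl (e : E) : LPA R G :=
  ⟨sgen R G e, NonUnitalAlgebra.subset_adjoin R ⟨LPAGen.edge e, rfl⟩⟩

/-- `s_e^*` as an element of `L_R(𝒢)`. -/
def tEl (e : E) : LPA R G :=
  ⟨tgen R G e, NonUnitalAlgebra.subset_adjoin R ⟨LPAGen.star e, rfl⟩⟩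

/-- `p_A` as an element of `L_R(𝒢)`. -/
def pEl (A : Set V) (hA : G.InG0 A) : LPA R G :=
  ⟨pgen R G A hA, NonUnitalAlgebra.subset_adjoin R ⟨LPAGen.proj A hA, rfl⟩⟩

end Ultragraph

/-- The additive span of the set of products `{a b : a ∈ S, b ∈ T}`. -/
def mulSpan {A : Type} [AddGroup A] [Mul A] (S T : AddSubgroup A) : AddSubgroup A :=
  AddSubgroup.closure {x | ∃ a ∈ S, ∃ b ∈ T, x = a * b}

/-!
Since `s(e) ∉ r(e)`, the only paths are the empty one and `e`, so `L_R(𝒢)_m` is spanned by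
`p_A`, `s_e p_A s_e^*` (for `m = 0`), `s_e p_A` (for `m = 1`), `p_A s_e^*` (for `m = -1`) and
vanishes for `|m| ≥ 2`. Since `G⁰ = {s(e)} ∪ r(e)` is a generalized vertex, `p_{G⁰}` exists and
is a unit for all of these; the local units are `ε₀ = p_{G⁰}`, `ε₁ = s_e s_e^*`, `ε₋₁ = s_e^* s_e = p_{r(e)}`
and `ε_m = 0` otherwise.
-/

theorem AddSubgroup.mul_eq_self_of_mem_closure {T : Type} [Ring T] {S : Set T} {u v : T}
    (h : ∀ x ∈ S, u * x = x ∧ x * v = x) {t : T} (ht : t ∈ AddSubgroup.closure S) :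
    u * t = t ∧ t * v = t := by
  have hu : AddSubgroup.closure S ≤ (AddMonoidHom.mulLeft u).eqLocus (AddMonoidHom.id T) :=
    AddSubgroup.closure_le _ |>.mpr fun x hx => (h x hx).1
  have hv : AddSubgroup.closure S ≤ (AddMonoidHom.mulRight v).eqLocus (AddMonoidHom.id T) :=
    AddSubgroup.closure_le _ |>.mpr fun x hx => (h x hx).2
  exact ⟨hu ht, hv ht⟩

namespace Ultragraph

variable {V E : Type} (R : Type) [CommRing R] (G : Ultragraph V E)

theorem gen_mul_gen {g h k : LPAGen G} (hr : LeavittRel R G (X R G g * X R G h) (X R G k)) :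
    gen R G g * gen R G h = gen R G k := by
  rw [gen, gen, ← map_mul]
  exact RingQuot.mkAlgHom_rel R hr

theorem pgen_congr {A B : Set V} (h : A = B) (hA : G.InG0 A) (hB : G.InG0 B) :
    pgen R G A hA = pgen R G B hB := by
  subst h; rfl

theorem pgen_mul_pgen (A B : Set V) (hA : G.InG0 A) (hB : G.InG0 B) :
    pgen R G A hA * pgen R G B hB = pgen R G (A ∩ B) (hA.inter hB) :=
  gen_mul_gen R G (.proj_mul A B hA hB)

theorem pgen_mul_comm (A B : Set V) (hA : G.InG0 A) (hB : G.InG0 B) :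
    pgen R G A hA * pgen R G B hB = pgen R G B hB * pgen R G A hA := by
  rw [pgen_mul_pgen, pgen_mul_pgen, pgen_congr R G (Set.inter_comm A B)]

theorem pgen_mul_pgen_of_subset {A B : Set V} (hAB : A ⊆ B) (hA : G.InG0 A) (hB : G.InG0 B) :
    pgen R G A hA * pgen R G B hB = pgen R G A hA := by
  rw [pgen_mul_pgen, pgen_congr R G (Set.inter_eq_left.mpr hAB)]

theorem pgen_src_mul_sgen (e : E) :
    pgen R G {G.src e} (.vertex (G.src e)) * sgen R G e = sgen R G e :=
  gen_mul_gen R G (.src_mul e)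

theorem sgen_mul_pgen_rng (e : E) :
    sgen R G e * pgen R G (G.rng e) (.range e) = sgen R G e :=
  gen_mul_gen R G (.mul_rng e)

theorem pgen_rng_mul_tgen (e : E) :
    pgen R G (G.rng e) (.range e) * tgen R G e = tgen R G e :=
  gen_mul_gen R G (.rng_mul_star e)

theorem tgen_mul_pgen_src (e : E) :
    tgen R G e * pgen R G {G.src e} (.vertex (G.src e)) = tgen R G e :=
  gen_mul_gen R G (.star_mul_src e)

theorem tgen_mul_sgen (e : E) :
    tgen R G e * sgen R G e = pgen R G (G.rng e) (.range e) :=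
  gen_mul_gen R G (.star_mul_same e)

theorem sgen_mul_tgen_mul_sgen (e : E) :
    sgen R G e * tgen R G e * sgen R G e = sgen R G e := by
  rw [mul_assoc, tgen_mul_sgen, sgen_mul_pgen_rng]

theorem tgen_mul_sgen_mul_tgen (e : E) :
    tgen R G e * (sgen R G e * tgen R G e) = tgen R G e := by
  rw [← mul_assoc, tgen_mul_sgen, pgen_rng_mul_tgen]

theorem pgen_univ_mul_sgen (hu : G.InG0 Set.univ) (e : E) :
    pgen R G Set.univ hu * sgen R G e = sgen R G e := by
  rw [← pgen_src_mul_sgen, ← mul_assoc, pgen_mul_comm,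
    pgen_mul_pgen_of_subset R G (Set.subset_univ _)]

theorem tgen_mul_pgen_univ (hu : G.InG0 Set.univ) (e : E) :
    tgen R G e * pgen R G Set.univ hu = tgen R G e := by
  rw [← tgen_mul_pgen_src, mul_assoc, pgen_mul_pgen_of_subset R G (Set.subset_univ _)]

theorem sgen_mem_zComp_one (e : E) : sgen R G e ∈ zComp R G 1 :=
  AddSubgroup.subset_closure ⟨1, [e], [], G.rng e, .range e, List.isChain_singleton e,
    List.isChain_nil, by simp, by simp [mono, sPath, tPath, sgen_mul_pgen_rng]⟩

theorem tgen_mem_zComp_neg_one (e : E) : tgen R G e ∈ zComp R G (-1) :=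
  AddSubgroup.subset_closure ⟨1, [], [e], G.rng e, .range e, List.isChain_nil,
    List.isChain_singleton e, by simp, by simp [mono, sPath, tPath, pgen_rng_mul_tgen]⟩

theorem pgen_mem_zComp_zero (A : Set V) (hA : G.InG0 A) : pgen R G A hA ∈ zComp R G 0 :=
  AddSubgroup.subset_closure ⟨1, [], [], A, hA, List.isChain_nil, List.isChain_nil, by simp,
    by simp [mono, sPath, tPath]⟩

theorem isPath_eq_nil_or_eq_singleton {e : E} (he : ∀ f : E, f = e) (hs : G.src e ∉ G.rng e)
    {α : List E} (hα : G.IsPath α) : α = [] ∨ α = [e] := by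
  match α, hα with
  | [], _ => exact .inl rfl
  | [a], _ => exact .inr (by rw [he a])
  | a :: b :: _, hα =>
    have hab := (List.isChain_cons_cons.mp hα).1
    rw [he a, he b] at hab
    exact absurd hab hs

def oneEdgeUnit (e : E) (hu : G.InG0 Set.univ) (m : ℤ) : LPABig R G :=
  if m = 0 then pgen R G Set.univ hu
  else if m = 1 then sgen R G e * tgen R G e
  else if m = -1 then pgen R G (G.rng e) (.range e)
  else 0

variable {G}

theorem oneEdgeUnit_mem_mulSpan (e : E) (hu : G.InG0 Set.univ) (m : ℤ) :
    oneEdgeUnit R G e hu m ∈ mulSpan (zComp R G m) (zComp R G (-m)) := by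
  unfold oneEdgeUnit
  split_ifs with h0 h1 h2
  · subst h0
    exact AddSubgroup.subset_closure ⟨_, pgen_mem_zComp_zero R G _ hu, _,
      pgen_mem_zComp_zero R G _ hu, (pgen_mul_pgen_of_subset R G subset_rfl hu hu).symm⟩
  · subst h1
    exact AddSubgroup.subset_closure ⟨_, sgen_mem_zComp_one R G e, _,
      tgen_mem_zComp_neg_one R G e, rfl⟩
  · subst h2
    exact AddSubgroup.subset_closure ⟨_, tgen_mem_zComp_neg_one R G e, _,
      by simpa using sgen_mem_zComp_one R G e, (tgen_mul_sgen R G e).symm⟩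
  · exact zero_mem _

theorem oneEdgeUnit_mul_mono (e : E) (hu : G.InG0 Set.univ) {α β : List E}
    (hα : α = [] ∨ α = [e]) (hβ : β = [] ∨ β = [e]) (A : Set V) (hA : G.InG0 A) :
    oneEdgeUnit R G e hu (α.length - β.length) * mono R G α A hA β = mono R G α A hA β ∧
      mono R G α A hA β * oneEdgeUnit R G e hu (β.length - α.length) = mono R G α A hA β := by
  rcases hα with rfl | rfl <;> rcases hβ with rfl | rfl <;>
    norm_num [oneEdgeUnit, mono, sPath, tPath]
  · exact ⟨by rw [pgen_mul_comm, pgen_mul_pgen_of_subset R G (Set.subset_univ A)],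
      pgen_mul_pgen_of_subset R G (Set.subset_univ A) hA hu⟩
  · exact ⟨by rw [← mul_assoc, pgen_mul_comm, mul_assoc, pgen_rng_mul_tgen],
      by rw [mul_assoc, tgen_mul_sgen_mul_tgen]⟩
  · exact ⟨by rw [← mul_assoc, sgen_mul_tgen_mul_sgen],
      by rw [mul_assoc, pgen_mul_comm, ← mul_assoc, sgen_mul_pgen_rng]⟩
  · exact ⟨by rw [← mul_assoc, ← mul_assoc, pgen_univ_mul_sgen],
      by rw [mul_assoc, tgen_mul_pgen_univ]⟩

end Ultragraph

open Ultragraph in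
theorem epsilonStrongZ_one_edge_general {V E : Type}
    (G : Ultragraph V E) (e : E) (he : ∀ f : E, f = e)
    (hs : G.src e ∉ G.rng e)
    (huniv : (Set.univ : Set V) = {G.src e} ∪ G.rng e)
    (R : Type) [CommRing R] :
    ∃ eps : ℤ → LPABig R G, ∀ m : ℤ,
      eps m ∈ mulSpan (zComp R G m) (zComp R G (-m)) ∧
      ∀ t ∈ zComp R G m, eps m * t = t ∧ t * eps (-m) = t := by
  have hu : G.InG0 Set.univ := huniv ▸ (InG0.vertex (G.src e)).union (InG0.range e)
  refine ⟨oneEdgeUnit R G e hu, fun m => ⟨oneEdgeUnit_mem_mulSpan R e hu m, fun t ht => ?_⟩⟩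
  refine AddSubgroup.mul_eq_self_of_mem_closure ?_ ht
  rintro _ ⟨l, α, β, A, hA, hα, hβ, rfl, rfl⟩
  have hunit := oneEdgeUnit_mul_mono R e hu (isPath_eq_nil_or_eq_singleton G he hs hα)
    (isPath_eq_nil_or_eq_singleton G he hs hβ) A hA
  rw [neg_sub]
  exact ⟨by rw [mul_smul_comm, hunit.1], by rw [smul_mul_assoc, hunit.2]⟩

open Ultragraph in
/-- an ultragraph with a single edge `e`, with `s(e) ∉ r(e)` and
`G⁰ = {s(e)} ∪ r(e)`, has epsilon-strongly `ℤ`-graded Leavitt path algebra (so the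
condition that sources of edges lie in ranges of edges is not necessary). -/
theorem epsilonStrongZ_one_edge {V E : Type} [Countable V] [Countable E]
    (G : Ultragraph V E) (e : E) (he : ∀ f : E, f = e)
    (hs : G.src e ∉ G.rng e)
    (huniv : (Set.univ : Set V) = {G.src e} ∪ G.rng e)
    (R : Type) [CommRing R] :
    ∃ eps : ℤ → LPABig R G, ∀ m : ℤ,
      eps m ∈ mulSpan (zComp R G m) (zComp R G (-m)) ∧
      ∀ t ∈ zComp R G m, eps m * t = t ∧ t * eps (-m) = t :=
  epsilonStrongZ_one_edge_general G e he hs huniv R
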